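/- Let R(θ) denote the 2×2 rotation matrix with rows (cos θ, sin θ) and (−sin θ, cos θ), and for i ∈ {1,…,N} let M_i = R(θ_i) · diag(λ_i^1, λ_i^2) · R(θ_i)ᵀ. Then for any indices i, j, the nested commutator satisfies [M_j,[M_i,M_j]] = (1/2)(λ_j^1 − λ_j^2)^2 (λ_i^1 − λ_i^2) sin(2(θ_i − θ_j)) · S(θ_j), where S(θ) is the 2×2 symmetric matrix with rows (sin 2θ, cos 2θ) and (cos 2θ, −sin 2θ). -/
import Mathlib


open Matrix BigOperators Real

/-- The matrix commutator `[A, B] = A * B - B * A`. -/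
def matComm (A B : Matrix (Fin 2) (Fin 2) ℝ) : Matrix (Fin 2) (Fin 2) ℝ :=
  A * B - B * A

/-- The 2×2 rotation matrix through angle `θ`. -/
noncomputable def rotMat (θ : ℝ) : Matrix (Fin 2) (Fin 2) ℝ :=
  !![Real.cos θ, Real.sin θ; -Real.sin θ, Real.cos θ]

/-- The symmetric matrix `S(θ)` with rows `(sin 2θ, cos 2θ)` and `(cos 2θ, −sin 2θ)`. -/
noncomputable def symS (θ : ℝ) : Matrix (Fin 2) (Fin 2) ℝ :=
  !![Real.sin (2 * θ), Real.cos (2 * θ); Real.cos (2 * θ), -Real.sin (2 * θ)]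

lemma conj_diag (θ p q : ℝ) :
    rotMat θ * Matrix.diagonal ![p, q] * (rotMat θ)ᵀ =
      ((p + q) / 2) • (1 : Matrix (Fin 2) (Fin 2) ℝ) +
      ((p - q) / 2) • !![Real.cos (2*θ), -Real.sin (2*θ); -Real.sin (2*θ), -Real.cos (2*θ)] := by
  have h := Real.sin_sq_add_cos_sq θ
  have hd : Matrix.diagonal ![p, q] = !![p, 0; 0, q] := by
    ext a b; fin_cases a <;> fin_cases b <;> simp [Matrix.diagonal]
  rw [hd]
  ext a b
  fin_cases a <;> fin_cases b <;>
    simp [rotMat, Matrix.mul_apply, Fin.sum_univ_two, Matrix.diagonal, Matrix.one_apply,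
      Real.sin_two_mul, Real.cos_two_mul, Matrix.vecHead, Matrix.vecTail, Matrix.transpose] <;>
    first
      | linear_combination ((p + q) / 2) * h
      | linear_combination ((p - q) / 2) * h
      | linear_combination (-(p - q) / 2) * h
      | linear_combination (-(p + q) / 2) * h
      | linear_combination p * h
      | linear_combination q * h
      | ring

/-- in spectral coordinates `M_i = R(θ_i) diag(λ_i¹, λ_i²) R(θ_i)ᵀ`,
the nested commutator is
`[M_j,[M_i,M_j]] = (1/2)(λ_j¹−λ_j²)²(λ_i¹−λ_i²) sin(2(θ_i−θ_j)) • S(θ_j)`. -/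
theorem nested_commutator_spectral_coordinates
    {N : ℕ} (θ : Fin N → ℝ) (l1 l2 : Fin N → ℝ)
    (M : Fin N → Matrix (Fin 2) (Fin 2) ℝ)
    (hM : ∀ i, M i = rotMat (θ i) * Matrix.diagonal ![l1 i, l2 i] * (rotMat (θ i))ᵀ) :
    ∀ i j, matComm (M j) (matComm (M i) (M j)) =
      ((1 / 2 : ℝ) * (l1 j - l2 j) ^ 2 * (l1 i - l2 i) *
        Real.sin (2 * (θ i - θ j))) • symS (θ j) := by
  intro i j
  rw [hM i, hM j, conj_diag, conj_diag]
  have hs : Real.sin (2 * (θ i - θ j)) =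
      Real.sin (2 * θ i) * Real.cos (2 * θ j) - Real.cos (2 * θ i) * Real.sin (2 * θ j) := by
    rw [mul_sub, Real.sin_sub]
  ext a b
  fin_cases a <;> fin_cases b <;>
    simp [matComm, symS, Matrix.mul_apply, Fin.sum_univ_two, Matrix.one_apply, hs] <;>
    ring
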